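/- arXiv:2305.00482 — 3 statements merged into one kernel-verified Lean document; each statement's English description precedes it below -/
import Mathlib

section
/- Let (H,B₁,B₂) be a Rota-Baxter system of Hopf algebras with cocycle σ. Then σ is idempotent: σ∘σ = σ. -/
open TensorProduct Coalgebra HopfAlgebra LinearMap

variable {F : Type*} [Field F] {H : Type*} [Ring H] [HopfAlgebra F H]

/-- The descendent operation `a ⊗ b ↦ B₁(a₁) b S(B₂(a₂))` as a linear map on `H ⊗ H`. -/
noncomputable def circL (B₁ B₂ : H →ₗ[F] H) : H ⊗[F] H →ₗ[F] H :=
  (LinearMap.mul' F H)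
    ∘ₗ (TensorProduct.map ((LinearMap.mul' F H) ∘ₗ TensorProduct.map B₁ LinearMap.id)
        ((antipode (R := F)) ∘ₗ B₂))
    ∘ₗ (TensorProduct.assoc F H H H).symm.toLinearMap
    ∘ₗ (TensorProduct.map LinearMap.id (TensorProduct.comm F H H).toLinearMap)
    ∘ₗ (TensorProduct.assoc F H H H).toLinearMap
    ∘ₗ (TensorProduct.map Coalgebra.comul LinearMap.id)

/-- The descendent operation `a ∘ b = B₁(a₁) b S(B₂(a₂))`. -/
noncomputable def circ (B₁ B₂ : H →ₗ[F] H) (a b : H) : H := circL B₁ B₂ (a ⊗ₜ[F] b)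

/-- The cocycle `σ = B₁ ∗ (S ∘ B₂)`, i.e. `σ(a) = B₁(a₁) S(B₂(a₂))`. -/
noncomputable def cocycleL (B₁ B₂ : H →ₗ[F] H) : H →ₗ[F] H :=
  (LinearMap.mul' F H) ∘ₗ (TensorProduct.map B₁ ((antipode (R := F)) ∘ₗ B₂)) ∘ₗ Coalgebra.comul

/-- `(H, B₁, B₂)` is a Rota-Baxter system of Hopf algebras: `B₁, B₂` are coalgebra
homomorphisms sending `1` to `1` such that `Bᵢ(a)Bᵢ(b) = Bᵢ(B₁(a₁) b S(B₂(a₂)))`. -/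
noncomputable def IsRBSystem (B₁ B₂ : H →ₗ[F] H) : Prop :=
  (Coalgebra.comul ∘ₗ B₁ = TensorProduct.map B₁ B₁ ∘ₗ Coalgebra.comul) ∧
  (Coalgebra.counit ∘ₗ B₁ = Coalgebra.counit (R := F)) ∧
  (Coalgebra.comul ∘ₗ B₂ = TensorProduct.map B₂ B₂ ∘ₗ Coalgebra.comul) ∧
  (Coalgebra.counit ∘ₗ B₂ = Coalgebra.counit (R := F)) ∧
  B₁ 1 = 1 ∧ B₂ 1 = 1 ∧
  (∀ a b : H, B₁ a * B₁ b = B₁ (circ B₁ B₂ a b)) ∧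
  (∀ a b : H, B₂ a * B₂ b = B₂ (circ B₁ B₂ a b))

/-! The cocycle `σ = B₁ ⋆ (S ∘ B₂)` is a convolution product. Over a cocommutative Hopf algebra the
antipode is a coalgebra map and convolution products of coalgebra maps are again coalgebra maps, so
`σ` is one; hence `σ ∘ σ = (B₁ ∘ σ) ⋆ (S ∘ B₂ ∘ σ)`. Finally `Bᵢ ∘ σ = Bᵢ`, because
`Bᵢ(σ(a)) = Bᵢ(a ∘ 1) = Bᵢ(a) Bᵢ(1) = Bᵢ(a)`. -/

open WithConv

section Convolution

variable {R C A : Type*} [CommSemiring R] [AddCommMonoid C] [Module R C]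

theorem LinearMap.convMul_comp_of_comul_comp [CoalgebraStruct R C] [Semiring A] [Algebra R A]
    (f g : C →ₗ[R] A) {φ : C →ₗ[R] C} (hφ : comul ∘ₗ φ = map φ φ ∘ₗ comul) :
    (toConv f * toConv g).ofConv ∘ₗ φ = (toConv (f ∘ₗ φ) * toConv (g ∘ₗ φ)).ofConv := by
  simp only [convMul_def, ofConv_toConv, comp_assoc, hφ, TensorProduct.map_comp]

theorem LinearMap.map_convOne_convOne {B D : Type*} [AddCommMonoid D] [Module R D]
    [Coalgebra R C] [Coalgebra R D] [Semiring A] [Algebra R A] [Semiring B] [Algebra R B] :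
    map (ofConv (1 : WithConv (C →ₗ[R] A))) (ofConv (1 : WithConv (D →ₗ[R] B))) =
      ofConv (1 : WithConv (C ⊗[R] D →ₗ[R] A ⊗[R] B)) := by
  ext
  simp [Algebra.TensorProduct.one_def, Algebra.algebraMap_eq_smul_one, smul_tmul', tmul_smul,
    smul_smul, mul_comm]

theorem Coalgebra.toLinearMap_comulCoalgHom [Coalgebra R C] [IsCocomm R C] :
    (comulCoalgHom R C).toLinearMap = comul := rfl

theorem LinearMap.comul_comp_convMul [Coalgebra R C] [IsCocomm R C] [Semiring A] [Bialgebra R A]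
    {f g : C →ₗ[R] A} (hf : comul ∘ₗ f = map f f ∘ₗ comul) (hg : comul ∘ₗ g = map g g ∘ₗ comul) :
    comul ∘ₗ (toConv f * toConv g).ofConv =
      map (toConv f * toConv g).ofConv (toConv f * toConv g).ofConv ∘ₗ comul := by
  have hA := algHom_comp_convMul_distrib (Bialgebra.comulAlgHom R A) (toConv f) (toConv g)
  have hC :=
    convMul_comp_coalgHom_distrib (toConv (map f f)) (toConv (map g g)) (comulCoalgHom R C)
  rw [Bialgebra.toLinearMap_comulAlgHom] at hA
  rw [toLinearMap_comulCoalgHom, map_convMul_map] at hC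
  rw [hA, ofConv_toConv, hC]
  simp only [hf, hg]

theorem HopfAlgebra.comul_comp_antipode [Semiring A] [HopfAlgebra R A] [IsCocomm R A] :
    comul ∘ₗ antipode R = map (antipode R) (antipode R) ∘ₗ (comul : A →ₗ[R] A ⊗[R] A) := by
  -- `δ ∘ S` is a right convolution inverse of `δ`; cocommutativity makes `(S ⊗ S) ∘ δ` a left one.
  have hleft : toConv (map (antipode R) (antipode R) ∘ₗ comul) *
      toConv (comul : A →ₗ[R] A ⊗[R] A) = 1 := by
    have h := convMul_comp_coalgHom_distrib (toConv (map (antipode R) (antipode R)))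
      (toConv (map (id : A →ₗ[R] A) id)) (comulCoalgHom R A)
    rw [toLinearMap_comulCoalgHom, map_convMul_map, antipode_mul_id, map_convOne_convOne] at h
    simp only [map_id, id_comp] at h
    rw [← toConv_ofConv (toConv _ * _), ← h]
    exact congrArg toConv (convOne_comp_coalgHom (comulCoalgHom R A))
  exact congrArg ofConv (left_inv_eq_right_inv hleft comul_right_inv).symm

end Convolution

theorem cocycleL_eq_convMul (B₁ B₂ : H →ₗ[F] H) :
    cocycleL B₁ B₂ = (toConv B₁ * toConv (antipode F ∘ₗ B₂)).ofConv := rfl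

theorem circ_one (B₁ B₂ : H →ₗ[F] H) (a : H) : circ B₁ B₂ a 1 = cocycleL B₁ B₂ a := by
  simp [circ, circL, cocycleL, ← (ℛ F a).eq, sum_tmul]

theorem comp_cocycleL_of_mul_eq_circ {B₁ B₂ B : H →ₗ[F] H} (hB_one : B 1 = 1)
    (hB_mul : ∀ a b : H, B a * B b = B (circ B₁ B₂ a b)) : B ∘ₗ cocycleL B₁ B₂ = B := by
  ext a
  rw [comp_apply, ← circ_one, ← hB_mul, hB_one, mul_one]

theorem IsRBSystem.comul_comp_cocycleL [IsCocomm F H] {B₁ B₂ : H →ₗ[F] H}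
    (hRB : IsRBSystem B₁ B₂) :
    comul ∘ₗ cocycleL B₁ B₂ = map (cocycleL B₁ B₂) (cocycleL B₁ B₂) ∘ₗ comul := by
  have hSB₂ :
      comul ∘ₗ (antipode F ∘ₗ B₂) = map (antipode F ∘ₗ B₂) (antipode F ∘ₗ B₂) ∘ₗ comul := by
    rw [← comp_assoc, comul_comp_antipode, comp_assoc, hRB.2.2.1, ← comp_assoc,
      ← TensorProduct.map_comp]
  rw [cocycleL_eq_convMul]
  exact comul_comp_convMul hRB.1 hSB₂

/-- The cocycle `σ` of a Rota-Baxter system of Hopf algebras is idempotent. -/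
theorem cocycle_idempotent
    (hcc : ∀ a : H, (TensorProduct.comm F H H) (Coalgebra.comul a) = Coalgebra.comul a)
    (B₁ B₂ : H →ₗ[F] H) (hRB : IsRBSystem B₁ B₂) :
    cocycleL B₁ B₂ ∘ₗ cocycleL B₁ B₂ = cocycleL B₁ B₂ := by
  have : IsCocomm F H := ⟨LinearMap.ext hcc⟩
  have hσ := hRB.comul_comp_cocycleL
  obtain ⟨-, -, -, -, h₁, h₂, hB₁, hB₂⟩ := hRB
  calc cocycleL B₁ B₂ ∘ₗ cocycleL B₁ B₂
      = (toConv (B₁ ∘ₗ cocycleL B₁ B₂) * toConv ((antipode F ∘ₗ B₂) ∘ₗ cocycleL B₁ B₂)).ofConv :=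
        convMul_comp_of_comul_comp _ _ hσ
    _ = cocycleL B₁ B₂ := by
        rw [comp_assoc, comp_cocycleL_of_mul_eq_circ h₁ hB₁, comp_cocycleL_of_mul_eq_circ h₂ hB₂,
          cocycleL_eq_convMul]
end

section
/- Let (H,B₁,B₂) be a Rota-Baxter system of Hopf algebras and define a∘b = B₁(a₁)bS(B₂(a₂)). Then ∘ is a coalgebra homomorphism H⊗H→H, i.e. Δ(a∘b) = (a₁∘b₁)⊗(a₂∘b₂) and ε(a∘b)=ε(a)ε(b) for all a,b∈H. -/
/-!
In a cocommutative Hopf algebra the comultiplication `Δ : H → H ⊗ H` is a bialgebra map, and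
bialgebra maps intertwine antipodes (both `f ∘ S` and `S ∘ f` are convolution inverses of `f`);
hence `Δ ∘ S = (S ⊗ S) ∘ Δ` and `S` is a coalgebra endomorphism. Multiplication `H ⊗ H → H` is
always a coalgebra map, so `a ⊗ b ↦ B₁(a₁) b S(B₂(a₂))` is a composite of coalgebra maps
`Δ ⊗ id`, a reshuffling of tensor factors, `B₁ ⊗ id ⊗ S B₂` and multiplications.
-/

open TensorProduct Coalgebra HopfAlgebra LinearMap

variable {F : Type*} [Field F] {H : Type*} [Ring H] [HopfAlgebra F H]

open WithConv

namespace BialgHom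
variable {R A B : Type*} [CommSemiring R] [Semiring A] [Semiring B] [HopfAlgebra R A]
  [HopfAlgebra R B]

theorem comp_antipode (f : A →ₐc[R] B) :
    f.toLinearMap ∘ₗ antipode R = antipode R ∘ₗ f.toLinearMap := by
  have hleft : toConv (f.toLinearMap ∘ₗ antipode R) * toConv f.toLinearMap = 1 := by
    apply ofConv_injective
    calc _ = (AlgHomClass.toAlgHom f).toLinearMap ∘ₗ
            (toConv (antipode R) * toConv .id : WithConv (A →ₗ[R] A)).ofConv := by
          rw [algHom_comp_convMul_distrib]; rfl
      _ = _ := by rw [antipode_mul_id, algHom_comp_convOne]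
  have hright : toConv f.toLinearMap * toConv (antipode R ∘ₗ f.toLinearMap) = 1 := by
    apply ofConv_injective
    calc _ = (toConv .id * toConv (antipode R) : WithConv (B →ₗ[R] B)).ofConv ∘ₗ
            f.toCoalgHom.toLinearMap := by
          rw [convMul_comp_coalgHom_distrib]; rfl
      _ = _ := by rw [id_mul_antipode, convOne_comp_coalgHom]
  exact congrArg ofConv (left_inv_eq_right_inv hleft hright)

end BialgHom

namespace HopfAlgebra
variable {R A : Type*} [CommSemiring R] [Semiring A] [HopfAlgebra R A] [IsCocomm R A]

theorem comul_comp_antipode_s7 :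
    comul ∘ₗ antipode R = map (antipode R) (antipode R) ∘ₗ comul (A := A) :=
  (Bialgebra.comulBialgHom R A).comp_antipode

variable (R A) in
noncomputable def antipodeCoalgHom : A →ₗc[R] A where
  toLinearMap := antipode R
  counit_comp := counit_comp_antipode
  map_comp_comul := comul_comp_antipode_s7.symm

end HopfAlgebra

section
variable [IsCocomm F H]

noncomputable def circCoalgHom (B₁ B₂ : H →ₗc[F] H) : H ⊗[F] H →ₗc[F] H :=
  (Bialgebra.mulCoalgHom F H).comp <|
    (Coalgebra.TensorProduct.map
        ((Bialgebra.mulCoalgHom F H).comp (Coalgebra.TensorProduct.map B₁ (CoalgHom.id F H)))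
        ((antipodeCoalgHom F H).comp B₂)).comp <|
    (Coalgebra.TensorProduct.assoc F F H H H).symm.toCoalgHom.comp <|
    (Coalgebra.TensorProduct.map (CoalgHom.id F H)
        (Bialgebra.TensorProduct.comm F H H).toCoalgEquiv.toCoalgHom).comp <|
    (Coalgebra.TensorProduct.assoc F F H H H).toCoalgHom.comp <|
    Coalgebra.TensorProduct.map (Coalgebra.comulCoalgHom F H) (CoalgHom.id F H)

theorem circCoalgHom_toLinearMap (B₁ B₂ : H →ₗc[F] H) :
    (circCoalgHom B₁ B₂).toLinearMap = circL B₁.toLinearMap B₂.toLinearMap :=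
  rfl

theorem comul_circ (B₁ B₂ : H →ₗc[F] H) (a b : H) :
    comul (circ B₁.toLinearMap B₂.toLinearMap a b) =
      map (circL B₁.toLinearMap B₂.toLinearMap) (circL B₁.toLinearMap B₂.toLinearMap)
        (tensorTensorTensorComm F H H H H (comul a ⊗ₜ[F] comul b)) := by
  rw [← circCoalgHom_toLinearMap]
  exact congr($((circCoalgHom B₁ B₂).map_comp_comul) (a ⊗ₜ b)).symm

theorem counit_circ (B₁ B₂ : H →ₗc[F] H) (a b : H) :
    counit (circ B₁.toLinearMap B₂.toLinearMap a b) = counit (R := F) a * counit (R := F) b := by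
  rw [circ, ← circCoalgHom_toLinearMap]
  calc _ = counit (R := F) (a ⊗ₜ[F] b) := congr($((circCoalgHom B₁ B₂).counit_comp) (a ⊗ₜ b))
    _ = _ := by simp [mul_comm]

end

/-- The descendent operation `∘` of a Rota-Baxter system of Hopf algebras is a
coalgebra homomorphism `H ⊗ H → H`: `Δ(a∘b) = (a₁∘b₁) ⊗ (a₂∘b₂)` and
`ε(a∘b) = ε(a)ε(b)`. -/
theorem circ_isCoalgHom
    (hcc : ∀ a : H, (TensorProduct.comm F H H) (Coalgebra.comul a) = Coalgebra.comul a)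
    (B₁ B₂ : H →ₗ[F] H) (hRB : IsRBSystem B₁ B₂) :
    (∀ a b : H, Coalgebra.comul (circ B₁ B₂ a b) =
      TensorProduct.map (circL B₁ B₂) (circL B₁ B₂)
        ((TensorProduct.tensorTensorTensorComm F H H H H)
          (Coalgebra.comul a ⊗ₜ[F] Coalgebra.comul b))) ∧
    (∀ a b : H, Coalgebra.counit (circ B₁ B₂ a b) =
      Coalgebra.counit (R := F) a * Coalgebra.counit (R := F) b) := by
  obtain ⟨hB₁comul, hB₁counit, hB₂comul, hB₂counit, -⟩ := hRB
  have : IsCocomm F H := ⟨LinearMap.ext hcc⟩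
  let B₁' : H →ₗc[F] H := ⟨B₁, hB₁counit, hB₁comul.symm⟩
  let B₂' : H →ₗc[F] H := ⟨B₂, hB₂counit, hB₂comul.symm⟩
  exact ⟨comul_circ B₁' B₂', counit_circ B₁' B₂'⟩
end

section
/- Let (H,B₁,B₂) be a Rota-Baxter system of Hopf algebras with descendent operation a∘b = B₁(a₁)bS(B₂(a₂)) and cocycle σ(a)=B₁(a₁)S(B₂(a₂)). Then the Hopf truss compatibility holds: a∘(bc) = (a₁∘b)S(σ(a₂))(a₃∘c) for all a,b,c∈H. In particular (H,·,∘) is a Hopf truss with cocycle σ. -/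
open TensorProduct Coalgebra HopfAlgebra LinearMap

variable {F : Type*} [Field F] {H : Type*} [Ring H] [HopfAlgebra F H]

/-! Work in the convolution algebra `WithConv (H →ₗ[F] H)` and write `φ_b` for `a ↦ a ∘ b`, so
that `φ_b = B₁ ⋆ (b · S B₂)`. Cocommutativity makes `S` an anti-homomorphism for `⋆` and an
involution, whence `S σ = B₂ ⋆ S B₁`. Since the `Bᵢ` are coalgebra maps, `S Bᵢ ⋆ Bᵢ = 1`, and
`φ_b ⋆ S σ ⋆ φ_c = B₁ ⋆ (b · S B₂) ⋆ B₂ ⋆ S B₁ ⋆ B₁ ⋆ (c · S B₂)` collapses to `φ_{bc}`. -/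

open WithConv

section Convolution

variable {R A C : Type*} [CommSemiring R] [Semiring A] [HopfAlgebra R A]
  [AddCommMonoid C] [Module R C] [Coalgebra R C]

lemma antipode_comp_convMul_self (T : C →ₗc[R] A) :
    toConv (antipode R ∘ₗ T.toLinearMap) * toConv T.toLinearMap = 1 := by
  have h := convMul_comp_coalgHom_distrib (toConv (antipode R)) (toConv .id) T
  rw [antipode_mul_id] at h
  ext c
  simpa using congr($h c).symm

lemma antipode_comp_convMul [IsCocomm R C] (f g : WithConv (C →ₗ[R] A)) :
    toConv (antipode R ∘ₗ (f * g).ofConv) =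
      toConv (antipode R ∘ₗ g.ofConv) * toConv (antipode R ∘ₗ f.ofConv) := by
  ext c
  have h := congr($(antipode_comp_mul_comp_comm (R := R) (A := A))
    (map g.ofConv f.ofConv (comul c)))
  simp only [comp_apply, LinearEquiv.coe_coe, ← map_comm, comm_comul] at h
  simp only [convMul_apply, comp_apply, h, map_map]

lemma mulLeft_comp_convMul (b : A) (f g : WithConv (C →ₗ[R] A)) :
    toConv (mulLeft R b ∘ₗ (f * g).ofConv) = toConv (mulLeft R b ∘ₗ f.ofConv) * g := by
  ext c
  simp [(ℛ R c).convMul_apply, mul_assoc]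

lemma antipode_comp_antipode [IsCocomm R A] :
    antipode R ∘ₗ antipode R = (LinearMap.id : A →ₗ[R] A) := by
  -- `S ∘ S` is a left and `id` a right convolution inverse of `S`.
  have h : toConv (antipode R ∘ₗ antipode R) * toConv (antipode R (A := A)) = 1 :=
    calc _ = toConv (antipode R ∘ₗ
            (toConv LinearMap.id * toConv (antipode R (A := A))).ofConv) := by
          rw [antipode_comp_convMul]; rfl
      _ = 1 := by
          rw [id_mul_antipode]
          ext a
          simp [Algebra.algebraMap_eq_smul_one]
  exact toConv_injective (left_inv_eq_right_inv h antipode_mul_id)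

end Convolution

lemma antipode_comp_cocycleL [IsCocomm F H] (B₁ B₂ : H →ₗ[F] H) :
    toConv (antipode F ∘ₗ cocycleL B₁ B₂) = toConv B₂ * toConv (antipode F ∘ₗ B₁) := by
  change toConv (antipode F ∘ₗ (toConv B₁ * toConv (antipode F ∘ₗ B₂)).ofConv) = _
  rw [antipode_comp_convMul, ofConv_toConv, ← comp_assoc, antipode_comp_antipode]
  rfl

lemma circL_comp_flip_mk_eq_convMul (B₁ B₂ : H →ₗ[F] H) (b : H) :
    toConv (circL B₁ B₂ ∘ₗ (mk F H H).flip b) =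
      toConv B₁ * toConv (mulLeft F b ∘ₗ antipode F ∘ₗ B₂) := by
  ext a
  simp [circL, (ℛ F a).convMul_apply, ← (ℛ F a).eq, sum_tmul, mul_assoc]

lemma circL_comp_flip_mk_mul [IsCocomm F H] (B₁ B₂ : H →ₗc[F] H) (b c : H) :
    toConv (circL B₁.toLinearMap B₂.toLinearMap ∘ₗ (mk F H H).flip (b * c)) =
      toConv (circL B₁.toLinearMap B₂.toLinearMap ∘ₗ (mk F H H).flip b) *
        (toConv (antipode F ∘ₗ cocycleL B₁.toLinearMap B₂.toLinearMap) *
          toConv (circL B₁.toLinearMap B₂.toLinearMap ∘ₗ (mk F H H).flip c)) := by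
  have cancel_B₂ (x : H) :
      toConv (mulLeft F x ∘ₗ antipode F ∘ₗ B₂.toLinearMap) * toConv B₂.toLinearMap =
        toConv (mulLeft F x ∘ₗ (1 : WithConv (H →ₗ[F] H)).ofConv) := by
    rw [← mulLeft_comp_convMul, antipode_comp_convMul_self]
  have mulLeft_mul_conv : toConv (mulLeft F b ∘ₗ (1 : WithConv (H →ₗ[F] H)).ofConv) *
      toConv (mulLeft F c ∘ₗ antipode F ∘ₗ B₂.toLinearMap) =
      toConv (mulLeft F (b * c) ∘ₗ antipode F ∘ₗ B₂.toLinearMap) := by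
    rw [← mulLeft_comp_convMul, one_mul, ofConv_toConv, mulLeft_mul, comp_assoc]
  simp only [circL_comp_flip_mk_eq_convMul, antipode_comp_cocycleL, mul_assoc]
  rw [← mul_assoc (toConv (antipode F ∘ₗ B₁.toLinearMap)), antipode_comp_convMul_self, one_mul,
    ← mul_assoc _ (toConv B₂.toLinearMap), cancel_B₂, mulLeft_mul_conv]

/-- A Rota-Baxter system of Hopf algebras satisfies the Hopf truss compatibility:
`a ∘ (bc) = (a₁ ∘ b) S(σ(a₂)) (a₃ ∘ c)`; hence `(H, ·, ∘)` is a Hopf truss with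
cocycle `σ`. -/
theorem rbSystem_hopfTruss
    (hcc : ∀ a : H, (TensorProduct.comm F H H) (Coalgebra.comul a) = Coalgebra.comul a)
    (B₁ B₂ : H →ₗ[F] H) (hRB : IsRBSystem B₁ B₂) :
    ∀ a b c : H, circ B₁ B₂ a (b * c) =
      LinearMap.mul' F H (TensorProduct.map
        (circL B₁ B₂ ∘ₗ (TensorProduct.mk F H H).flip b)
        ((LinearMap.mul' F H) ∘ₗ TensorProduct.map
          ((antipode (R := F)) ∘ₗ cocycleL B₁ B₂)
          (circL B₁ B₂ ∘ₗ (TensorProduct.mk F H H).flip c))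
        (TensorProduct.map LinearMap.id Coalgebra.comul (Coalgebra.comul a))) := by
  obtain ⟨hΔ₁, hε₁, hΔ₂, hε₂, -⟩ := hRB
  have : IsCocomm F H := ⟨LinearMap.ext hcc⟩
  intro a b c
  have key := circL_comp_flip_mk_mul ⟨B₁, hε₁, hΔ₁.symm⟩ ⟨B₂, hε₂, hΔ₂.symm⟩ b c
  rw [map_map, comp_id]
  exact congr($key a)
end
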